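/- Let E = ℝ³ be euclidean 3-space (EuclideanSpace ℝ (Fin 3)), let V = E × E with the ℓ²-product inner product (WithLp 2 (E × E)), and let T = {(x, y) ∈ V : ‖x‖ = 1 and ‖y‖ = 1} (so T is S² × S² ⊂ ℝ³ × ℝ³). If A : V → V is a linear isometric equivalence with A(T) = T, then there exist linear isometric equivalences B, C : E → E such that either A(x, y) = (B x, C y) for all (x, y) ∈ V, or A(x, y) = (B y, C x) for all (x, y) ∈ V. -/

import Mathlib

/-- Euclidean 3-space. -/
noncomputable abbrev Euc3 : Type := EuclideanSpace ℝ (Fin 3)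

/-- `ℝ³ × ℝ³` with the ℓ²-product inner product. -/
noncomputable abbrev Euc3Prod : Type := WithLp 2 (Euc3 × Euc3)

/-- `S² × S² ⊂ ℝ³ × ℝ³`: the set of pairs of unit vectors. -/
noncomputable def sphereProd : Set Euc3Prod :=
  {v | ‖(WithLp.equiv 2 (Euc3 × Euc3) v).1‖ = 1 ∧ ‖(WithLp.equiv 2 (Euc3 × Euc3) v).2‖ = 1}

open scoped RealInnerProductSpace

set_option maxHeartbeats 1000000

private lemma sq_eq_of_nonneg {p q : ℝ} (hp : 0 ≤ p) (hq : 0 ≤ q) (h : p ^ 2 = q ^ 2) :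
    p = q := by
  rw [← Real.sqrt_sq hp, h, Real.sqrt_sq hq]

/-- Every linear isometry of `ℝ³ × ℝ³` carrying `S² × S²` onto itself is either a pair
of linear isometries of the factors or such a pair composed with the coordinate
switch. -/
theorem linearIsometryEquiv_preserving_sphereProd_is_block_or_switch
    (A : Euc3Prod ≃ₗᵢ[ℝ] Euc3Prod) (hA : (A : Euc3Prod → Euc3Prod) '' sphereProd = sphereProd) :
    ∃ B C : Euc3 ≃ₗᵢ[ℝ] Euc3,
      (∀ x y : Euc3, A ((WithLp.equiv 2 (Euc3 × Euc3)).symm (x, y)) =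
        (WithLp.equiv 2 (Euc3 × Euc3)).symm (B x, C y)) ∨
      (∀ x y : Euc3, A ((WithLp.equiv 2 (Euc3 × Euc3)).symm (x, y)) =
        (WithLp.equiv 2 (Euc3 × Euc3)).symm (B y, C x)) := by
  set L :=
    (WithLp.linearEquiv 2 ℝ (Euc3 × Euc3)).symm.trans
      (A.toLinearEquiv.trans (WithLp.linearEquiv 2 ℝ (Euc3 × Euc3))) with hLdef
  set M :=
    LinearMap.fst ℝ Euc3 Euc3 ∘ₗ L.toLinearMap ∘ₗ LinearMap.inl ℝ Euc3 Euc3 with hM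
  set N :=
    LinearMap.fst ℝ Euc3 Euc3 ∘ₗ L.toLinearMap ∘ₗ LinearMap.inr ℝ Euc3 Euc3 with hN
  set P :=
    LinearMap.snd ℝ Euc3 Euc3 ∘ₗ L.toLinearMap ∘ₗ LinearMap.inl ℝ Euc3 Euc3 with hP
  set Q :=
    LinearMap.snd ℝ Euc3 Euc3 ∘ₗ L.toLinearMap ∘ₗ LinearMap.inr ℝ Euc3 Euc3 with hQ
  -- decomposition of L
  have hL : ∀ x y : Euc3, L (x, y) = (M x + N y, P x + Q y) := by
    intro x y
    have : (x, y) = ((x, 0) : Euc3 × Euc3) + (0, y) := by simp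
    rw [this, map_add]
    rfl
  -- A applied, expressed through L
  have hAL : ∀ x y : Euc3, A ((WithLp.equiv 2 (Euc3 × Euc3)).symm (x, y)) =
      (WithLp.equiv 2 (Euc3 × Euc3)).symm (L (x, y)) := by
    intro x y; rfl
  -- isometry condition
  have hiso : ∀ x y : Euc3, ‖M x + N y‖ ^ 2 + ‖P x + Q y‖ ^ 2 = ‖x‖ ^ 2 + ‖y‖ ^ 2 := by
    intro x y
    have h := A.norm_map ((WithLp.equiv 2 (Euc3 × Euc3)).symm (x, y))
    have h2 := congrArg (· ^ 2) h
    rw [WithLp.prod_norm_sq_eq_of_L2, WithLp.prod_norm_sq_eq_of_L2] at h2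
    have h3 : ((L (x, y)).1 = M x + N y) ∧ ((L (x, y)).2 = P x + Q y) := by
      rw [hL]; exact ⟨rfl, rfl⟩
    calc ‖M x + N y‖ ^ 2 + ‖P x + Q y‖ ^ 2
        = ‖(L (x, y)).1‖ ^ 2 + ‖(L (x, y)).2‖ ^ 2 := by rw [h3.1, h3.2]
      _ = ‖x‖ ^ 2 + ‖y‖ ^ 2 := h2
  -- sphere condition
  have hT : ∀ x y : Euc3, ‖x‖ = 1 → ‖y‖ = 1 →
      ‖M x + N y‖ = 1 ∧ ‖P x + Q y‖ = 1 := by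
    intro x y hx hy
    have hv : (WithLp.equiv 2 (Euc3 × Euc3)).symm (x, y) ∈ sphereProd := by
      constructor <;> simp [sphereProd, hx, hy]
    have := hA ▸ Set.mem_image_of_mem A hv
    obtain ⟨h1, h2⟩ := this
    rw [hAL] at h1 h2
    simp only [Equiv.apply_symm_apply] at h1 h2
    rw [hL] at h1 h2
    exact ⟨h1, h2⟩
  -- orthogonality of ranges
  have horthMN : ∀ x y : Euc3, ⟪M x, N y⟫ = 0 := by
    have key : ∀ x y : Euc3, ‖x‖ = 1 → ‖y‖ = 1 → ⟪M x, N y⟫ = 0 := by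
      intro x y hx hy
      have h1 := (hT x y hx hy).1
      have h2 := (hT x (-y) hx (by rwa [norm_neg])).1
      rw [map_neg] at h2
      have e1 := congrArg (· ^ 2) h1
      have e2 := congrArg (· ^ 2) h2
      simp only [one_pow] at e1 e2
      rw [norm_add_sq_real] at e1
      rw [← sub_eq_add_neg, norm_sub_sq_real] at e2
      linarith
    intro x y
    rcases eq_or_ne x 0 with rfl | hx
    · simp
    rcases eq_or_ne y 0 with rfl | hy
    · simp
    have hx' : ‖(‖x‖⁻¹ • x : Euc3)‖ = 1 := by
      rw [norm_smul, norm_inv, norm_norm, inv_mul_cancel₀ (norm_ne_zero_iff.mpr hx)]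
    have hy' : ‖(‖y‖⁻¹ • y : Euc3)‖ = 1 := by
      rw [norm_smul, norm_inv, norm_norm, inv_mul_cancel₀ (norm_ne_zero_iff.mpr hy)]
    have h := key _ _ hx' hy'
    rw [map_smul, map_smul, real_inner_smul_left, real_inner_smul_right] at h
    rcases mul_eq_zero.mp h with h' | h'
    · exact absurd h' (inv_ne_zero (norm_ne_zero_iff.mpr hx))
    rcases mul_eq_zero.mp h' with h'' | h''
    · exact absurd h'' (inv_ne_zero (norm_ne_zero_iff.mpr hy))
    · exact h''
  have horthPQ : ∀ x y : Euc3, ⟪P x, Q y⟫ = 0 := by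
    have key : ∀ x y : Euc3, ‖x‖ = 1 → ‖y‖ = 1 → ⟪P x, Q y⟫ = 0 := by
      intro x y hx hy
      have h1 := (hT x y hx hy).2
      have h2 := (hT x (-y) hx (by rwa [norm_neg])).2
      rw [map_neg] at h2
      have e1 := congrArg (· ^ 2) h1
      have e2 := congrArg (· ^ 2) h2
      simp only [one_pow] at e1 e2
      rw [norm_add_sq_real] at e1
      rw [← sub_eq_add_neg, norm_sub_sq_real] at e2
      linarith
    intro x y
    rcases eq_or_ne x 0 with rfl | hx
    · simp
    rcases eq_or_ne y 0 with rfl | hy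
    · simp
    have hx' : ‖(‖x‖⁻¹ • x : Euc3)‖ = 1 := by
      rw [norm_smul, norm_inv, norm_norm, inv_mul_cancel₀ (norm_ne_zero_iff.mpr hx)]
    have hy' : ‖(‖y‖⁻¹ • y : Euc3)‖ = 1 := by
      rw [norm_smul, norm_inv, norm_norm, inv_mul_cancel₀ (norm_ne_zero_iff.mpr hy)]
    have h := key _ _ hx' hy'
    rw [map_smul, map_smul, real_inner_smul_left, real_inner_smul_right] at h
    rcases mul_eq_zero.mp h with h' | h'
    · exact absurd h' (inv_ne_zero (norm_ne_zero_iff.mpr hx))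
    rcases mul_eq_zero.mp h' with h'' | h''
    · exact absurd h'' (inv_ne_zero (norm_ne_zero_iff.mpr hy))
    · exact h''
  -- pythagorean condition on unit vectors
  have hMN : ∀ x y : Euc3, ‖x‖ = 1 → ‖y‖ = 1 → ‖M x‖ ^ 2 + ‖N y‖ ^ 2 = 1 := by
    intro x y hx hy
    have h1 := (hT x y hx hy).1
    have e1 := congrArg (· ^ 2) h1
    simp only [one_pow] at e1
    rw [norm_add_sq_real, horthMN] at e1
    linarith
  have hPQ : ∀ x y : Euc3, ‖x‖ = 1 → ‖y‖ = 1 → ‖P x‖ ^ 2 + ‖Q y‖ ^ 2 = 1 := by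
    intro x y hx hy
    have h1 := (hT x y hx hy).2
    have e1 := congrArg (· ^ 2) h1
    simp only [one_pow] at e1
    rw [norm_add_sq_real, horthPQ] at e1
    linarith
  -- the constants
  set x₀ : Euc3 := EuclideanSpace.single (0 : Fin 3) (1 : ℝ) with hx₀def
  have hx₀ : ‖x₀‖ = 1 := by
    rw [hx₀def, EuclideanSpace.norm_single, norm_one]
  set a := ‖M x₀‖ with hadef
  set b := ‖N x₀‖ with hbdef
  set c := ‖P x₀‖ with hcdef
  set d := ‖Q x₀‖ with hddef
  have hMa : ∀ x : Euc3, ‖M x‖ = a * ‖x‖ := by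
    intro x
    rcases eq_or_ne x 0 with rfl | hx
    · simp
    have hx' : ‖(‖x‖⁻¹ • x : Euc3)‖ = 1 := by
      rw [norm_smul, norm_inv, norm_norm, inv_mul_cancel₀ (norm_ne_zero_iff.mpr hx)]
    have h1 := hMN _ x₀ hx' hx₀
    have h2 := hMN x₀ x₀ hx₀ hx₀
    have h3 : ‖M (‖x‖⁻¹ • x)‖ ^ 2 = a ^ 2 := by rw [hadef]; linarith
    have h4 : ‖M (‖x‖⁻¹ • x)‖ = a := sq_eq_of_nonneg (norm_nonneg _) (norm_nonneg _) h3
    rw [map_smul, norm_smul, norm_inv, norm_norm] at h4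
    have hxne : ‖x‖ ≠ 0 := norm_ne_zero_iff.mpr hx
    field_simp at h4
    linarith
  have hNb : ∀ y : Euc3, ‖N y‖ = b * ‖y‖ := by
    intro y
    rcases eq_or_ne y 0 with rfl | hy
    · simp
    have hy' : ‖(‖y‖⁻¹ • y : Euc3)‖ = 1 := by
      rw [norm_smul, norm_inv, norm_norm, inv_mul_cancel₀ (norm_ne_zero_iff.mpr hy)]
    have h1 := hMN x₀ _ hx₀ hy'
    have h2 := hMN x₀ x₀ hx₀ hx₀
    have h3 : ‖N (‖y‖⁻¹ • y)‖ ^ 2 = b ^ 2 := by rw [hbdef]; linarith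
    have h4 : ‖N (‖y‖⁻¹ • y)‖ = b := sq_eq_of_nonneg (norm_nonneg _) (norm_nonneg _) h3
    rw [map_smul, norm_smul, norm_inv, norm_norm] at h4
    have hyne : ‖y‖ ≠ 0 := norm_ne_zero_iff.mpr hy
    field_simp at h4
    linarith
  have hPc : ∀ x : Euc3, ‖P x‖ = c * ‖x‖ := by
    intro x
    rcases eq_or_ne x 0 with rfl | hx
    · simp
    have hx' : ‖(‖x‖⁻¹ • x : Euc3)‖ = 1 := by
      rw [norm_smul, norm_inv, norm_norm, inv_mul_cancel₀ (norm_ne_zero_iff.mpr hx)]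
    have h1 := hPQ _ x₀ hx' hx₀
    have h2 := hPQ x₀ x₀ hx₀ hx₀
    have h3 : ‖P (‖x‖⁻¹ • x)‖ ^ 2 = c ^ 2 := by rw [hcdef]; linarith
    have h4 : ‖P (‖x‖⁻¹ • x)‖ = c := sq_eq_of_nonneg (norm_nonneg _) (norm_nonneg _) h3
    rw [map_smul, norm_smul, norm_inv, norm_norm] at h4
    have hxne : ‖x‖ ≠ 0 := norm_ne_zero_iff.mpr hx
    field_simp at h4
    linarith
  have hQd : ∀ y : Euc3, ‖Q y‖ = d * ‖y‖ := by
    intro y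
    rcases eq_or_ne y 0 with rfl | hy
    · simp
    have hy' : ‖(‖y‖⁻¹ • y : Euc3)‖ = 1 := by
      rw [norm_smul, norm_inv, norm_norm, inv_mul_cancel₀ (norm_ne_zero_iff.mpr hy)]
    have h1 := hPQ x₀ _ hx₀ hy'
    have h2 := hPQ x₀ x₀ hx₀ hx₀
    have h3 : ‖Q (‖y‖⁻¹ • y)‖ ^ 2 = d ^ 2 := by rw [hddef]; linarith
    have h4 : ‖Q (‖y‖⁻¹ • y)‖ = d := sq_eq_of_nonneg (norm_nonneg _) (norm_nonneg _) h3
    rw [map_smul, norm_smul, norm_inv, norm_norm] at h4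
    have hyne : ‖y‖ ≠ 0 := norm_ne_zero_iff.mpr hy
    field_simp at h4
    linarith
  have hab : a ^ 2 + b ^ 2 = 1 := hMN x₀ x₀ hx₀ hx₀
  have hcd : c ^ 2 + d ^ 2 = 1 := hPQ x₀ x₀ hx₀ hx₀
  have hac : a ^ 2 + c ^ 2 = 1 := by
    have := hiso x₀ 0
    simp only [map_zero, add_zero, norm_zero] at this
    rw [hx₀] at this
    nlinarith [hMa x₀, hPc x₀, hx₀]
  have ha0 : 0 ≤ a := norm_nonneg _
  have hb0 : 0 ≤ b := norm_nonneg _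
  have hc0 : 0 ≤ c := norm_nonneg _
  have hd0 : 0 ≤ d := norm_nonneg _
  clear_value a b c d
  clear hadef hbdef hcdef hddef hiso hT hMN hPQ hx₀def hx₀
  -- no two "crossing" coefficients can be positive: rank argument
  have hrank : ∀ M' N' : Euc3 →ₗ[ℝ] Euc3, (∀ x y, ⟪M' x, N' y⟫ = 0) →
      Function.Injective M' → Function.Injective N' → False := by
    intro M' N' horth hMinj hNinj
    have hrM : Module.finrank ℝ (LinearMap.range M') = 3 := by
      rw [LinearMap.finrank_range_of_inj hMinj, finrank_euclideanSpace_fin]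
    have hle : LinearMap.range N' ≤ (LinearMap.range M')ᗮ := by
      rintro v ⟨y, rfl⟩
      rw [Submodule.mem_orthogonal]
      rintro u ⟨x, rfl⟩
      exact horth x y
    have hsum := (LinearMap.range M').finrank_add_finrank_orthogonal
    rw [hrM, finrank_euclideanSpace_fin] at hsum
    have h0 : Module.finrank ℝ ((LinearMap.range M')ᗮ) = 0 := by omega
    have hrN : Module.finrank ℝ (LinearMap.range N') = 3 := by
      rw [LinearMap.finrank_range_of_inj hNinj, finrank_euclideanSpace_fin]
    have := Submodule.finrank_mono hle
    omega
  have hinj : ∀ (M' : Euc3 →ₗ[ℝ] Euc3) (t : ℝ), 0 < t → (∀ x, ‖M' x‖ = t * ‖x‖) →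
      Function.Injective M' := by
    intro M' t ht hnorm
    rw [injective_iff_map_eq_zero]
    intro x hx
    have := hnorm x
    rw [hx, norm_zero] at this
    have : ‖x‖ = 0 := by
      rcases mul_eq_zero.mp this.symm with h | h
      · exact absurd h (ne_of_gt ht)
      · exact h
    exact norm_eq_zero.mp this
  have hkey : ¬(0 < a ∧ 0 < b) := by
    rintro ⟨ha, hb⟩
    exact hrank M N horthMN (hinj M a ha hMa) (hinj N b hb hNb)
  rcases eq_or_lt_of_le ha0 with ha | ha
  · -- a = 0 : switch case
    have ha' : a = 0 := ha.symm
    have hb1 : b = 1 := by nlinarith [sq_nonneg (b-1), sq_nonneg (b+1)]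
    have hc1 : c = 1 := by nlinarith [sq_nonneg (c-1), sq_nonneg (c+1)]
    have hd' : d = 0 := by nlinarith
    have hMzero : ∀ x : Euc3, M x = 0 := by
      intro x; rw [← norm_eq_zero, hMa, ha', zero_mul]
    have hQzero : ∀ y : Euc3, Q y = 0 := by
      intro y; rw [← norm_eq_zero, hQd, hd', zero_mul]
    have hNiso : ∀ y : Euc3, ‖N y‖ = ‖y‖ := by
      intro y; rw [hNb, hb1, one_mul]
    have hPiso : ∀ x : Euc3, ‖P x‖ = ‖x‖ := by
      intro x; rw [hPc, hc1, one_mul]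
    refine ⟨(⟨N, hNiso⟩ : Euc3 →ₗᵢ[ℝ] Euc3).toLinearIsometryEquiv rfl,
           (⟨P, hPiso⟩ : Euc3 →ₗᵢ[ℝ] Euc3).toLinearIsometryEquiv rfl, Or.inr ?_⟩
    intro x y
    rw [hAL, hL, hMzero, hQzero, zero_add, add_zero]
    rfl
  · -- a > 0 : block case
    have hb' : b = 0 := by
      by_contra hb
      exact hkey ⟨ha, lt_of_le_of_ne hb0 (Ne.symm hb)⟩
    have ha1 : a = 1 := by nlinarith [sq_nonneg (a-1), sq_nonneg (a+1)]
    have hc' : c = 0 := by nlinarith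
    have hd1 : d = 1 := by nlinarith [sq_nonneg (d-1), sq_nonneg (d+1)]
    have hNzero : ∀ y : Euc3, N y = 0 := by
      intro y; rw [← norm_eq_zero, hNb, hb', zero_mul]
    have hPzero : ∀ x : Euc3, P x = 0 := by
      intro x; rw [← norm_eq_zero, hPc, hc', zero_mul]
    have hMiso : ∀ x : Euc3, ‖M x‖ = ‖x‖ := by
      intro x; rw [hMa, ha1, one_mul]
    have hQiso : ∀ y : Euc3, ‖Q y‖ = ‖y‖ := by
      intro y; rw [hQd, hd1, one_mul]
    refine ⟨(⟨M, hMiso⟩ : Euc3 →ₗᵢ[ℝ] Euc3).toLinearIsometryEquiv rfl,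
           (⟨Q, hQiso⟩ : Euc3 →ₗᵢ[ℝ] Euc3).toLinearIsometryEquiv rfl, Or.inl ?_⟩
    intro x y
    rw [hAL, hL, hNzero, hPzero, zero_add, add_zero]
    rfl
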